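/- Let A be an n×n real Metzler and Hurwitz matrix, Θ(ξ) = (exp(−ξA) − I)^{−1} for ξ > 0, and let b, c be nonnegative column vectors in ℝⁿ. Then cᵀΘ(ξ)b > 0 for all ξ > 0 if and only if there exist indices i, j with c_i > 0, b_j > 0, and either i = j or the graph of A contains a directed walk from i to j. If this condition fails, then cᵀΘ(ξ)b = 0 for all ξ > 0. -/

import Mathlib

open Matrix NormedSpace

/-- A square real matrix is Metzler if all its off-diagonal entries are nonnegative. -/
def IsMetzler {n : ℕ} (A : Matrix (Fin n) (Fin n) ℝ) : Prop :=
  ∀ i j, i ≠ j → 0 ≤ A i j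

/-- A square real matrix is Hurwitz if every eigenvalue of the matrix, viewed as a complex
matrix, has strictly negative real part. -/
def IsHurwitz {n : ℕ} (A : Matrix (Fin n) (Fin n) ℝ) : Prop :=
  ∀ μ ∈ spectrum ℂ (A.map ((↑) : ℝ → ℂ)), μ.re < 0

/-- There is a directed walk from `i` to `j` in the graph of `A`: a finite sequence
`i = p 0, p 1, …, p L = j` with `L ≥ 1` and `A (p t) (p (t+1)) > 0` for every `t < L`. -/
def HasWalk {n : ℕ} (A : Matrix (Fin n) (Fin n) ℝ) (i j : Fin n) : Prop :=
  ∃ (L : ℕ) (p : ℕ → Fin n), 1 ≤ L ∧ p 0 = i ∧ p L = j ∧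
    ∀ t < L, 0 < A (p t) (p (t + 1))

open Filter Topology Relation
open scoped Nat

/-!
Fix `ξ > 0` and put `X = exp (ξ A)`. An eigenvector of `X` can be chosen to be an eigenvector of
`A` as well, so every eigenvalue of `X` is `exp (ξ μ)` with `Re μ < 0`; hence the spectral radius
of `X` is below `1`, Gelfand's formula gives `X ^ k → 0`, and the Neumann series yields
`Θ(ξ) = (X⁻¹ - 1)⁻¹ = ∑_{k ≥ 0} X ^ (k + 1) = ∑_{k ≥ 0} exp ((k + 1) ξ A)`.

For `s` large, `A + s 1` is entrywise nonnegative with positive diagonal and the same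
off-diagonal pattern as `A`, and `exp (t A) = e^{-t s} exp (t (A + s 1))`. Expanding the last
exponential as a power series, `exp (t A)` with `t > 0` is entrywise nonnegative, and its `(i, j)`
entry is positive exactly when `i = j` or the graph of `A` has a walk from `i` to `j`. The same
dichotomy then holds for the entries of `Θ(ξ)`, and `cᵀ Θ(ξ) b = ∑ c_i Θ(ξ)_{ij} b_j` is a sum of
nonnegative terms.
-/

theorem tendsto_pow_atTop_nhds_zero_of_spectralRadius_lt_one {A : Type*} [NormedRing A]
    [NormedAlgebra ℂ A] [CompleteSpace A] {a : A} (ha : spectralRadius ℂ a < 1) :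
    Tendsto (fun k => a ^ k) atTop (𝓝 0) := by
  obtain ⟨r, hρr, hr1⟩ := ENNReal.lt_iff_exists_nnreal_btwn.mp ha
  have hgelfand := spectrum.pow_nnnorm_pow_one_div_tendsto_nhds_spectralRadius a
  have hbound : ∀ᶠ k : ℕ in atTop, ‖a ^ k‖ ≤ (r : ℝ) ^ k := by
    filter_upwards [hgelfand.eventually_lt_const hρr, eventually_ge_atTop 1] with k hk hk1
    rw [one_div, ENNReal.rpow_inv_lt_iff (by positivity), ENNReal.rpow_natCast] at hk
    exact_mod_cast hk.le
  exact squeeze_zero_norm' hbound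
    (tendsto_pow_atTop_nhds_zero_of_lt_one r.coe_nonneg (mod_cast hr1))

namespace Matrix

section Exp

variable {ι : Type*} [Fintype ι] [DecidableEq ι]

theorem hasSum_exp_apply (B : Matrix ι ι ℝ) (i j : ι) :
    HasSum (fun k => (k ! : ℝ)⁻¹ * (B ^ k) i j) (exp B i j) := by
  open scoped Norms.Operator in
  exact Pi.hasSum.mp (Pi.hasSum.mp (exp_series_hasSum_exp' (𝕂 := ℝ) B) i) j

theorem exp_apply_nonneg {B : Matrix ι ι ℝ} (hB : ∀ i j, 0 ≤ B i j) (i j : ι) :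
    0 ≤ exp B i j :=
  (hasSum_exp_apply B i j).nonneg fun k => by
    have := pow_apply_nonneg hB k i j
    positivity

theorem exists_pow_apply_pos_of_reflTransGen {B : Matrix ι ι ℝ} (hB : ∀ i j, 0 ≤ B i j)
    {i j : ι} (h : ReflTransGen (fun p q => 0 < B p q) i j) : ∃ k, 0 < (B ^ k) i j := by
  induction h with
  | refl => exact ⟨0, by simp⟩
  | @tail p q _ hpq ih =>
    obtain ⟨k, hk⟩ := ih
    refine ⟨k + 1, ?_⟩
    rw [pow_succ, mul_apply]
    exact Finset.sum_pos' (fun r _ => mul_nonneg (pow_apply_nonneg hB k i r) (hB r q))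
      ⟨p, Finset.mem_univ p, mul_pos hk hpq⟩

theorem reflTransGen_of_pow_apply_ne_zero {R : Type*} [Semiring R] {B : Matrix ι ι R}
    {k : ℕ} {i j : ι} (h : (B ^ k) i j ≠ 0) : ReflTransGen (fun p q => B p q ≠ 0) i j := by
  induction k generalizing j with
  | zero =>
    obtain rfl : i = j := by
      by_contra hij
      exact h (one_apply_ne hij)
    exact .refl
  | succ k ih =>
    rw [pow_succ, mul_apply] at h
    obtain ⟨r, -, hr⟩ := Finset.exists_ne_zero_of_sum_ne_zero h
    exact (ih (left_ne_zero_of_mul hr)).tail (right_ne_zero_of_mul hr)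

theorem exp_smul_apply_pos_of_reflTransGen {B : Matrix ι ι ℝ} (hB : ∀ i j, 0 ≤ B i j)
    {t : ℝ} (ht : 0 < t) {i j : ι} (h : ReflTransGen (fun p q => 0 < B p q) i j) :
    0 < exp (t • B) i j := by
  obtain ⟨k, hk⟩ := exists_pow_apply_pos_of_reflTransGen hB h
  have hterm : 0 < (k ! : ℝ)⁻¹ * ((t • B) ^ k) i j := by
    rw [smul_pow, smul_apply, smul_eq_mul]
    positivity
  refine hterm.trans_le (le_hasSum (hasSum_exp_apply _ i j) k fun l _ => ?_)
  have := pow_apply_nonneg (fun p q => mul_nonneg ht.le (hB p q)) l i j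
  positivity

theorem exp_smul_apply_eq_zero_of_not_reflTransGen {B : Matrix ι ι ℝ} (t : ℝ) {i j : ι}
    (h : ¬ReflTransGen (fun p q => B p q ≠ 0) i j) : exp (t • B) i j = 0 := by
  have hpow (k : ℕ) : (B ^ k) i j = 0 := by
    by_contra hk
    exact h (reflTransGen_of_pow_apply_ne_zero hk)
  have hzero : HasSum (fun _ : ℕ => (0 : ℝ)) (exp (t • B) i j) := by
    simpa [smul_pow, hpow] using hasSum_exp_apply (t • B) i j
  exact hzero.unique hasSum_zero

theorem exp_add_smul_one (M : Matrix ι ι ℝ) (s : ℝ) :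
    exp (M + s • 1) = Real.exp s • exp M := by
  rw [exp_add_of_commute _ _ ((Commute.one_right M).smul_right s), smul_one_eq_diagonal,
    exp_diagonal]
  ext i j
  simp [mul_diagonal, Real.exp_eq_exp_ℝ, mul_comm]

theorem exp_smul_add_smul_one (M : Matrix ι ι ℝ) (s t : ℝ) :
    exp (t • (M + s • 1)) = Real.exp (t * s) • exp (t • M) := by
  rw [← exp_add_smul_one, smul_add, smul_smul]

theorem exp_mulVec_of_mulVec_eq_smul {M : Matrix ι ι ℂ} {μ : ℂ} {v : ι → ℂ}
    (h : M *ᵥ v = μ • v) : exp M *ᵥ v = Complex.exp μ • v := by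
  have hpow (k : ℕ) : M ^ k *ᵥ v = μ ^ k • v := by
    induction k with
    | zero => simp
    | succ k ih => rw [pow_succ, ← mulVec_mulVec, h, mulVec_smul, ih, smul_smul, pow_succ']
  have hM : HasSum (fun k => ((k ! : ℂ)⁻¹ • M ^ k) *ᵥ v) (exp M *ᵥ v) := by
    open scoped Norms.Operator in
    exact (exp_series_hasSum_exp' (𝕂 := ℂ) M).map (mulVec.addMonoidHomLeft v)
      (continuous_id.matrix_mulVec continuous_const)
  have hμ := (exp_series_hasSum_exp' (𝕂 := ℂ) μ).smul_const v
  simp only [smul_mulVec, hpow, smul_smul] at hM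
  rw [Complex.exp_eq_exp_ℂ]
  exact hM.unique hμ

theorem exists_exp_eq_of_mem_spectrum_exp {M : Matrix ι ι ℂ} {l : ℂ}
    (hl : l ∈ spectrum ℂ (exp M)) : ∃ μ ∈ spectrum ℂ M, Complex.exp μ = l := by
  rw [← spectrum_toLin', ← Module.End.hasEigenvalue_iff_mem_spectrum] at hl
  have hcomm : Commute (toLin' (exp M)) (toLin' M) := by
    open scoped Norms.Operator in
    exact ((Commute.refl M).exp_left).map toLinAlgEquiv'
  have : Nontrivial (Module.End.eigenspace (toLin' (exp M)) l) :=
    Submodule.nontrivial_iff_ne_bot.mpr hl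
  -- `M` preserves the `l`-eigenspace of `exp M`, so it has an eigenvector `w` there.
  obtain ⟨μ, hμ⟩ := Module.End.exists_eigenvalue
    ((toLin' M).restrict (Module.End.mapsTo_genEigenspace_of_comm hcomm l 1))
  obtain ⟨w, hw⟩ := hμ.exists_hasEigenvector
  have hw0 : (w : ι → ℂ) ≠ 0 := by simpa using hw.2
  have hMw : M *ᵥ w = μ • w := congrArg Subtype.val (Module.End.mem_eigenspace_iff.mp hw.1)
  have hEw : exp M *ᵥ w = l • w := by
    simpa using Module.End.mem_eigenspace_iff.mp w.2
  refine ⟨μ, ?_, smul_left_injective ℂ hw0 ?_⟩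
  · rw [← spectrum_toLin', ← Module.End.hasEigenvalue_iff_mem_spectrum]
    exact Module.End.hasEigenvalue_of_hasEigenvector ⟨by simpa using hMw, hw0⟩
  · exact (exp_mulVec_of_mulVec_eq_smul hMw).symm.trans hEw

theorem spectralRadius_exp_lt_one {M : Matrix ι ι ℂ} (hM : ∀ μ ∈ spectrum ℂ M, μ.re < 0) :
    spectralRadius ℂ (exp M) < 1 := by
  open scoped Norms.Operator in
  rcases (spectrum ℂ (exp M)).eq_empty_or_nonempty with hempty | hne
  · simp [spectralRadius, hempty]
  · refine spectrum.spectralRadius_lt_of_forall_lt_of_nonempty hne fun l hl => ?_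
    obtain ⟨μ, hμ, rfl⟩ := exists_exp_eq_of_mem_spectrum_exp hl
    rw [← NNReal.coe_lt_coe, coe_nnnorm, Complex.norm_exp, NNReal.coe_one, Real.exp_lt_one_iff]
    exact hM μ hμ

end Exp

section Neumann

variable {ι K : Type*} [Fintype ι] [DecidableEq ι] [Field K] [TopologicalSpace K]
  [IsTopologicalRing K] [T2Space K]

theorem isUnit_one_sub_of_tendsto_pow_nhds_zero {X : Matrix ι ι K}
    (hX : Tendsto (X ^ ·) atTop (𝓝 0)) : IsUnit (1 - X) := by
  rw [isUnit_iff_isUnit_det, isUnit_iff_ne_zero]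
  intro hdet
  obtain ⟨v, hv0, hv⟩ := exists_mulVec_eq_zero_iff.mpr hdet
  rw [sub_mulVec, one_mulVec, sub_eq_zero] at hv
  have hpow (k : ℕ) : X ^ k *ᵥ v = v := by
    induction k with
    | zero => simp
    | succ k ih => rw [pow_succ, ← mulVec_mulVec, ← hv, ih]
  have hlim := ((continuous_id.matrix_mulVec (continuous_const (y := v))).tendsto 0).comp hX
  simp only [Function.comp_def, id, hpow, zero_mulVec] at hlim
  exact hv0 (tendsto_nhds_unique tendsto_const_nhds hlim)

theorem tendsto_sum_pow_succ_nhds_inv_inv_sub_one {X : Matrix ι ι K}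
    (hX : Tendsto (X ^ ·) atTop (𝓝 0)) (hXu : IsUnit X.det) :
    Tendsto (fun N => ∑ k ∈ Finset.range N, X ^ (k + 1)) atTop (𝓝 (X⁻¹ - 1)⁻¹) := by
  set S := (1 - X)⁻¹
  have hS : (1 - X) * S = 1 :=
    mul_nonsing_inv _ ((isUnit_iff_isUnit_det _).mp (isUnit_one_sub_of_tendsto_pow_nhds_zero hX))
  have hinv : (X⁻¹ - 1)⁻¹ = X * S := inv_eq_right_inv <| by
    rw [← mul_assoc, sub_mul, nonsing_inv_mul _ hXu, one_mul, hS]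
  have hsum (N : ℕ) : ∑ k ∈ Finset.range N, X ^ (k + 1) = X * ((1 - X ^ N) * S) := by
    simp_rw [pow_succ', ← Finset.mul_sum, ← geom_sum_mul_neg, mul_assoc, hS, mul_one]
  simp_rw [hsum, hinv]
  have hlim := (tendsto_const_nhds (x := X)).mul
    (((tendsto_const_nhds (x := (1 : Matrix ι ι K))).sub hX).mul_const S)
  rwa [sub_zero, one_mul] at hlim

theorem hasSum_pow_succ_apply_inv_inv_sub_one {X : Matrix ι ι ℝ} (hX0 : ∀ i j, 0 ≤ X i j)
    (hX : Tendsto (X ^ ·) atTop (𝓝 0)) (hXu : IsUnit X.det) (i j : ι) :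
    HasSum (fun k => (X ^ (k + 1)) i j) ((X⁻¹ - 1)⁻¹ i j) := by
  rw [hasSum_iff_tendsto_nat_of_nonneg (fun k => pow_apply_nonneg hX0 _ i j)]
  have hentry : Continuous fun M : Matrix ι ι ℝ => M i j :=
    (continuous_apply j).comp (continuous_apply i)
  simpa [Function.comp_def, sum_apply] using
    (hentry.tendsto _).comp (tendsto_sum_pow_succ_nhds_inv_inv_sub_one hX hXu)

end Neumann

section Nonneg

variable {m n R : Type*} [Fintype m] [Fintype n] [Semiring R] [LinearOrder R]
  [IsStrictOrderedRing R] {M : Matrix m n R} {b : n → R} {c : m → R}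

theorem dotProduct_mulVec_nonneg (hM : ∀ i j, 0 ≤ M i j) (hb : ∀ j, 0 ≤ b j)
    (hc : ∀ i, 0 ≤ c i) : 0 ≤ c ⬝ᵥ M *ᵥ b :=
  dotProduct_nonneg_of_nonneg hc fun i => Finset.sum_nonneg fun j _ => mul_nonneg (hM i j) (hb j)

theorem dotProduct_mulVec_pos_iff (hM : ∀ i j, 0 ≤ M i j) (hb : ∀ j, 0 ≤ b j)
    (hc : ∀ i, 0 ≤ c i) :
    0 < c ⬝ᵥ M *ᵥ b ↔ ∃ i j, 0 < c i ∧ 0 < b j ∧ 0 < M i j := by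
  have hterm (i : m) (j : n) : 0 ≤ c i * (M i j * b j) :=
    mul_nonneg (hc i) (mul_nonneg (hM i j) (hb j))
  simp only [dotProduct, mulVec, Finset.mul_sum]
  rw [Finset.sum_pos_iff_of_nonneg fun i _ => Finset.sum_nonneg fun j _ => hterm i j]
  simp only [Finset.sum_pos_iff_of_nonneg fun j _ => hterm _ j, Finset.mem_univ, true_and]
  refine exists_congr fun i => exists_congr fun j => ?_
  have hpos {x y : R} (hx : 0 ≤ x) (hy : 0 ≤ y) : 0 < x * y ↔ 0 < x ∧ 0 < y := by
    refine ⟨fun h => ⟨hx.lt_of_ne ?_, hy.lt_of_ne ?_⟩, fun h => mul_pos h.1 h.2⟩ <;>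
      rintro rfl <;> simp at h
  rw [hpos (hc i) (mul_nonneg (hM i j) (hb j)), hpos (hM i j) (hb j)]
  tauto

end Nonneg

end Matrix

section Metzler

variable {n : ℕ} {A : Matrix (Fin n) (Fin n) ℝ}

theorem hasWalk_iff_transGen {i j : Fin n} :
    HasWalk A i j ↔ TransGen (fun p q => 0 < A p q) i j := by
  constructor
  · rintro ⟨L, p, hL, rfl, rfl, hp⟩
    have hprefix (m : ℕ) (hm : m < L) : TransGen (fun p q => 0 < A p q) (p 0) (p (m + 1)) := by
      induction m with
      | zero => exact .single (hp 0 hm)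
      | succ m ih => exact (ih (by omega)).tail (hp _ hm)
    obtain ⟨m, rfl⟩ : ∃ m, L = m + 1 := ⟨L - 1, by omega⟩
    exact hprefix m (by omega)
  · intro h
    induction h with
    | @single q hq =>
      refine ⟨1, fun k => if k = 0 then i else q, le_rfl, by simp, by simp, fun t ht => ?_⟩
      obtain rfl : t = 0 := by omega
      simpa using hq
    | @tail q r _ hqr ih =>
      obtain ⟨L, p, hL, hp0, hpL, hp⟩ := ih
      refine ⟨L + 1, fun k => if k ≤ L then p k else r, by omega, by simpa using hp0,
        by simp, fun t ht => ?_⟩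
      rcases Nat.lt_succ_iff_lt_or_eq.mp ht with ht | rfl
      · simpa [ht.le, Nat.succ_le_of_lt ht] using hp t ht
      · simpa [hpL] using hqr

theorem eq_or_hasWalk_iff_reflTransGen {i j : Fin n} :
    i = j ∨ HasWalk A i j ↔ ReflTransGen (fun p q => 0 < A p q) i j := by
  rw [reflTransGen_iff_eq_or_transGen, hasWalk_iff_transGen, eq_comm]

theorem IsMetzler.exists_add_smul_one_nonneg (hA : IsMetzler A) :
    ∃ s : ℝ, (∀ i j, 0 ≤ (A + s • 1) i j) ∧ ∀ i, 0 < (A + s • 1) i i := by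
  obtain ⟨s, hs⟩ := (Set.finite_range fun i => -A i i).bddAbove
  have hdiag (i : Fin n) : 0 < (A + (s + 1) • 1) i i := by
    have := hs ⟨i, rfl⟩
    simp only [Matrix.add_apply, Matrix.smul_apply, one_apply_eq, smul_eq_mul, mul_one]
    linarith
  refine ⟨s + 1, fun i j => ?_, hdiag⟩
  rcases eq_or_ne i j with rfl | hij
  · exact (hdiag i).le
  · simpa [one_apply_ne hij] using hA i j hij

theorem IsMetzler.exp_smul_apply_nonneg (hA : IsMetzler A) {t : ℝ} (ht : 0 ≤ t) (i j : Fin n) :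
    0 ≤ exp (t • A) i j := by
  obtain ⟨s, hB, -⟩ := hA.exists_add_smul_one_nonneg
  rw [← mul_nonneg_iff_of_pos_left (Real.exp_pos (t * s)), ← smul_eq_mul, ← Matrix.smul_apply,
    ← exp_smul_add_smul_one]
  exact exp_apply_nonneg (fun p q => mul_nonneg ht (hB p q)) i j

theorem IsMetzler.exp_smul_apply_pos_iff (hA : IsMetzler A) {t : ℝ} (ht : 0 < t) (i j : Fin n) :
    0 < exp (t • A) i j ↔ i = j ∨ HasWalk A i j := by
  obtain ⟨s, hB, hdiag⟩ := hA.exists_add_smul_one_nonneg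
  have hoff {p q : Fin n} (hpq : p ≠ q) : (A + s • 1) p q = A p q := by
    simp [one_apply_ne hpq]
  rw [← mul_pos_iff_of_pos_left (Real.exp_pos (t * s)), ← smul_eq_mul, ← Matrix.smul_apply,
    ← exp_smul_add_smul_one, eq_or_hasWalk_iff_reflTransGen]
  constructor
  · intro hpos
    by_contra hwalk
    refine hpos.ne' (exp_smul_apply_eq_zero_of_not_reflTransGen t fun h => hwalk ?_)
    refine ReflTransGen.lift' id (fun p q hpq => ?_) i j h
    rcases eq_or_ne p q with rfl | hne
    · exact .refl
    · rw [hoff hne] at hpq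
      exact .single ((hA p q hne).lt_of_ne' hpq)
  · refine fun h => exp_smul_apply_pos_of_reflTransGen hB ht
      (ReflTransGen.mono (fun p q hpq => ?_) i j h)
    rcases eq_or_ne p q with rfl | hne
    · exact hdiag p
    · rwa [hoff hne]

theorem IsHurwitz.tendsto_pow_exp_smul (hA : IsHurwitz A) {ξ : ℝ} (hξ : 0 < ξ) :
    Tendsto (fun k => exp (ξ • A) ^ k) atTop (𝓝 0) := by
  set M : Matrix (Fin n) (Fin n) ℂ := (ξ : ℂ) • A.map ((↑) : ℝ → ℂ)
  have hM : ∀ μ ∈ spectrum ℂ M, μ.re < 0 := by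
    intro μ hμ
    rw [show M = Units.mk0 (ξ : ℂ) (mod_cast hξ.ne') • A.map ((↑) : ℝ → ℂ) from rfl,
      spectrum.unit_smul_eq_smul] at hμ
    obtain ⟨ν, hν, rfl⟩ := hμ
    simpa [Complex.mul_re] using mul_neg_of_pos_of_neg hξ (hA ν hν)
  have hexp : (exp (ξ • A)).map ((↑) : ℝ → ℂ) = exp M := by
    have hcont : Continuous (Complex.ofRealHom.mapMatrix : Matrix (Fin n) (Fin n) ℝ →+* _) :=
      continuous_id.matrix_map Complex.continuous_ofReal
    have hmap : Complex.ofRealHom.mapMatrix (ξ • A) = M := by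
      ext i j
      simp [M]
    rw [← hmap]
    open scoped Norms.Operator in
    exact map_exp _ hcont (ξ • A)
  have hpow : Tendsto (fun k => exp M ^ k) atTop (𝓝 0) := by
    open scoped Norms.Operator in
    exact tendsto_pow_atTop_nhds_zero_of_spectralRadius_lt_one (spectralRadius_exp_lt_one hM)
  have hre := ((continuous_id.matrix_map Complex.continuous_re).tendsto 0).comp hpow
  convert hre using 1
  · ext k : 1
    have hk : (exp (ξ • A) ^ k).map ((↑) : ℝ → ℂ) = (exp (ξ • A)).map (↑) ^ k :=
      map_pow Complex.ofRealHom.mapMatrix (exp (ξ • A)) k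
    rw [Function.comp_apply, id, ← hexp, ← hk, Matrix.map_map]
    ext i j
    simp
  · simp

theorem IsMetzler.hasSum_exp_smul_apply_inv_exp_neg_smul_sub_one (hA : IsMetzler A)
    (hH : IsHurwitz A) {ξ : ℝ} (hξ : 0 < ξ) (i j : Fin n) :
    HasSum (fun k : ℕ => exp (((k + 1) * ξ) • A) i j) ((exp (-ξ • A) - 1)⁻¹ i j) := by
  have hpow (k : ℕ) : exp (((k + 1) * ξ) • A) = exp (ξ • A) ^ (k + 1) := by
    rw [← Matrix.exp_nsmul, ← Nat.cast_smul_eq_nsmul ℝ, smul_smul]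
    push_cast
    rfl
  simp_rw [hpow, neg_smul, Matrix.exp_neg]
  exact Matrix.hasSum_pow_succ_apply_inv_inv_sub_one (hA.exp_smul_apply_nonneg hξ.le)
    (hH.tendsto_pow_exp_smul hξ) ((isUnit_iff_isUnit_det _).mp (Matrix.isUnit_exp _)) i j

theorem IsMetzler.inv_exp_neg_smul_sub_one_apply_nonneg (hA : IsMetzler A) (hH : IsHurwitz A)
    {ξ : ℝ} (hξ : 0 < ξ) (i j : Fin n) : 0 ≤ (exp (-ξ • A) - 1)⁻¹ i j :=
  (hA.hasSum_exp_smul_apply_inv_exp_neg_smul_sub_one hH hξ i j).nonneg fun _ =>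
    hA.exp_smul_apply_nonneg (by positivity) i j

theorem IsMetzler.inv_exp_neg_smul_sub_one_apply_pos_iff (hA : IsMetzler A) (hH : IsHurwitz A)
    {ξ : ℝ} (hξ : 0 < ξ) (i j : Fin n) :
    0 < (exp (-ξ • A) - 1)⁻¹ i j ↔ i = j ∨ HasWalk A i j := by
  have hsum := hA.hasSum_exp_smul_apply_inv_exp_neg_smul_sub_one hH hξ i j
  have hpos_iff (k : ℕ) := hA.exp_smul_apply_pos_iff (t := (k + 1) * ξ) (by positivity) i j
  have hnonneg (k : ℕ) := hA.exp_smul_apply_nonneg (t := (k + 1) * ξ) (by positivity) i j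
  refine ⟨fun hpos => ?_, fun hR =>
    ((hpos_iff 0).mpr hR).trans_le (le_hasSum hsum 0 fun k _ => hnonneg k)⟩
  by_contra hR
  have hzero (k : ℕ) : exp (((k + 1) * ξ) • A) i j = 0 :=
    (hnonneg k).antisymm' (not_lt.mp (hR ∘ (hpos_iff k).mp))
  simp only [hzero] at hsum
  exact hpos.ne' (hsum.unique hasSum_zero)

end Metzler

theorem stmt2 {n : ℕ} (A : Matrix (Fin n) (Fin n) ℝ)
    (hM : IsMetzler A) (hH : IsHurwitz A) (b c : Fin n → ℝ)
    (hb : ∀ i, 0 ≤ b i) (hc : ∀ i, 0 ≤ c i) :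
    ((∀ ξ : ℝ, 0 < ξ →
        0 < c ⬝ᵥ ((exp (-ξ • A) - 1)⁻¹ : Matrix (Fin n) (Fin n) ℝ).mulVec b) ↔
      (∃ i j, 0 < c i ∧ 0 < b j ∧ (i = j ∨ HasWalk A i j))) ∧
    (¬ (∃ i j, 0 < c i ∧ 0 < b j ∧ (i = j ∨ HasWalk A i j)) →
      ∀ ξ : ℝ, 0 < ξ →
        c ⬝ᵥ ((exp (-ξ • A) - 1)⁻¹ : Matrix (Fin n) (Fin n) ℝ).mulVec b = 0) := by
  have hpos_iff (ξ : ℝ) (hξ : 0 < ξ) :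
      0 < c ⬝ᵥ (exp (-ξ • A) - 1)⁻¹ *ᵥ b ↔
        ∃ i j, 0 < c i ∧ 0 < b j ∧ (i = j ∨ HasWalk A i j) := by
    simp_rw [dotProduct_mulVec_pos_iff (hM.inv_exp_neg_smul_sub_one_apply_nonneg hH hξ) hb hc,
      hM.inv_exp_neg_smul_sub_one_apply_pos_iff hH hξ]
  refine ⟨⟨fun h => (hpos_iff 1 one_pos).mp (h 1 one_pos), fun h ξ hξ => (hpos_iff ξ hξ).mpr h⟩,
    fun h ξ hξ => le_antisymm (not_lt.mp (h ∘ (hpos_iff ξ hξ).mp)) ?_⟩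
  exact dotProduct_mulVec_nonneg (hM.inv_exp_neg_smul_sub_one_apply_nonneg hH hξ) hb hc
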